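/- arXiv:2002.12808 — 5 statements merged into one kernel-verified Lean document; each statement's English description precedes it below -/
import Mathlib

section
/- Let $a < b$ be real numbers, $n > 0$, and let $F : [a,b] \to \mathbb{R}$ be continuous with $F(a) = 0$. Then for every $x \in [a,b]$ the function $t \mapsto (x-t)^{n-1} F(t)$ is Lebesgue integrable on $(a,x)$, the function $J_a^n F(x) := \frac{1}{\Gamma(n)} \int_a^x (x-t)^{n-1} F(t)\,dt$ is continuous on $[a,b]$, and $J_a^n F(a) = 0$. (This is the transport, via the isometric isomorphism between the space $D_{HK}$ of Henstock–Kurzweil integrable distributions and $C_0 = \{F \in C[a,b] : F(a)=0\}$ sending a distribution to its continuous primitive, of the paper's Theorem that the Riemann–Liouville fractional integral operator $\mathcal{J}_a^n$ maps $D_{HK}$ into $D_{HK}$.) -/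
/-! On `[a, b]`, `∫ t in a..x, (x - t) ^ (n - 1) * F t` is the convolution of two functions on `ℝ`:
the extension of `F` by its boundary values (bounded and continuous, and zero left of `a`
because `F a = 0`) and the kernel `u ^ (n - 1)` cut down to `(0, b - a]`, which is integrable
because `n - 1 > -1`. A convolution of a bounded continuous function with an integrable one is
continuous, and the same domination gives the integrability of the integrand. -/

open MeasureTheory Set

/-- The Riemann–Liouville fractional integral of order `n` based at `a`. -/
noncomputable def rlInt (a n : ℝ) (h : ℝ → ℝ) (x : ℝ) : ℝ :=
  (1 / Real.Gamma n) * ∫ t in a..x, (x - t) ^ (n - 1) * h t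

open ContinuousLinearMap
open scoped Convolution

noncomputable def truncRpowKernel (s c : ℝ) : ℝ → ℝ := (Ioc 0 c).indicator (· ^ s)

theorem integrable_truncRpowKernel {s c : ℝ} (hs : -1 < s) (hc : 0 ≤ c) :
    Integrable (truncRpowKernel s c) := by
  rw [truncRpowKernel, integrable_indicator_iff measurableSet_Ioc,
    ← intervalIntegrable_iff_integrableOn_Ioc_of_le hc]
  exact intervalIntegral.intervalIntegrable_rpow' hs

section IccExtend

variable {a b : ℝ} {F : ℝ → ℝ} (hab : a ≤ b)

theorem bddAbove_range_norm_IccExtend (hF : ContinuousOn F (Icc a b)) :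
    BddAbove (range fun t => ‖IccExtend hab (fun y : Icc a b => F y) t‖) := by
  rw [← image_univ, ← image_image (‖·‖), image_univ, IccExtend_range, ← image_eq_range]
  exact (isCompact_Icc.image_of_continuousOn hF).bddAbove_image continuous_norm.continuousOn

theorem continuous_IccExtend_of_continuousOn (hF : ContinuousOn F (Icc a b)) :
    Continuous (IccExtend hab fun y : Icc a b => F y) :=
  hF.domRestrict.Icc_extend'

theorem IccExtend_mul_truncRpowKernel_sub {x : ℝ} (s : ℝ) (hFa : F a = 0) (hxb : x ≤ b) :
    (fun t => IccExtend hab (fun y : Icc a b => F y) t * truncRpowKernel s (b - a) (x - t)) =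
      (Ioo a x).indicator (fun t => (x - t) ^ s * F t) := by
  funext t
  by_cases hta : t ≤ a
  · rw [IccExtend_of_le_left hab _ hta, hFa, zero_mul,
      indicator_of_notMem (fun h : t ∈ Ioo a x => by linarith [h.1])]
  by_cases htx : x ≤ t
  · simp [truncRpowKernel, indicator_of_notMem (fun h : t ∈ Ioo a x => by linarith [h.2]),
      indicator_of_notMem (fun h : x - t ∈ Ioc 0 (b - a) => by linarith [h.1])]
  push Not at hta htx
  have hk : x - t ∈ Ioc 0 (b - a) := ⟨by linarith, by linarith⟩
  rw [IccExtend_of_mem hab _ ⟨hta.le, by linarith⟩, truncRpowKernel, indicator_of_mem hk,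
    indicator_of_mem (show t ∈ Ioo a x from ⟨hta, htx⟩), mul_comm]

theorem convolution_IccExtend_truncRpowKernel {x : ℝ} (s : ℝ) (hFa : F a = 0) (hxb : x ≤ b) :
    (IccExtend hab (fun y : Icc a b => F y) ⋆[mul ℝ ℝ] truncRpowKernel s (b - a)) x =
      ∫ t in Ioo a x, (x - t) ^ s * F t := by
  rw [convolution_def]
  simp only [mul_apply']
  rw [IccExtend_mul_truncRpowKernel_sub hab s hFa hxb, integral_indicator measurableSet_Ioo]

theorem integrableOn_Ioo_sub_rpow_mul {x s : ℝ} (hab : a ≤ b) (hs : -1 < s)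
    (hF : ContinuousOn F (Icc a b)) (hFa : F a = 0) (hxb : x ≤ b) :
    IntegrableOn (fun t => (x - t) ^ s * F t) (Ioo a x) := by
  obtain ⟨C, hC⟩ := bddAbove_range_norm_IccExtend hab hF
  have hk := (integrable_truncRpowKernel hs (sub_nonneg.2 hab)).comp_sub_left x
  have := hk.bdd_mul (c := C) (continuous_IccExtend_of_continuousOn hab hF).aestronglyMeasurable
    (Filter.Eventually.of_forall fun t => hC (mem_range_self t))
  rwa [IccExtend_mul_truncRpowKernel_sub hab s hFa hxb,
    integrable_indicator_iff measurableSet_Ioo] at this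

end IccExtend

theorem rl_integral_maps_C0_to_C0 (a b n : ℝ) (hab : a < b) (hn : 0 < n)
    (F : ℝ → ℝ) (hF : ContinuousOn F (Icc a b)) (hFa : F a = 0) :
    (∀ x ∈ Icc a b, IntegrableOn (fun t => (x - t) ^ (n - 1) * F t) (Ioo a x) volume) ∧
    ContinuousOn (rlInt a n F) (Icc a b) ∧
    rlInt a n F a = 0 := by
  have hs : -1 < n - 1 := by linarith
  refine ⟨fun x hx => integrableOn_Ioo_sub_rpow_mul hab.le hs hF hFa hx.2, ?_, by simp [rlInt]⟩
  set G := IccExtend hab.le fun y : Icc a b => F y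
  set k := truncRpowKernel (n - 1) (b - a)
  have hconv : Continuous (G ⋆[mul ℝ ℝ] k) :=
    (bddAbove_range_norm_IccExtend hab.le hF).continuous_convolution_left_of_integrable _
      (continuous_IccExtend_of_continuousOn hab.le hF)
      (integrable_truncRpowKernel hs (sub_nonneg.2 hab.le))
  refine ContinuousOn.congr (f := fun x => 1 / Real.Gamma n * (G ⋆[mul ℝ ℝ] k) x)
    (by fun_prop) fun x hx => ?_
  rw [rlInt, intervalIntegral.integral_of_le hx.1, integral_Ioc_eq_integral_Ioo,
    ← convolution_IccExtend_truncRpowKernel hab.le _ hFa hx.2]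
end

section
/- Let $a < b$ be real numbers, $n \ge 1$, and let $f \in L^1[a,b]$. Then for every $x \in [a,b]$, $\left| \frac{1}{\Gamma(n)} \int_a^x (x-t)^{n-1} f(t)\,dt \right| \le \frac{(x-a)^{n-1}}{\Gamma(n)} \sup_{y \in [a,x]} \left| \int_a^y f(t)\,dt \right|$. (This estimates the fractional integral $J_a^n f$ pointwise by the Alexiewicz norm $\|f\|_A = \sup_{y\in[a,b]} |\int_a^y f|$ of $f$, rather than by its $L^1$ norm; it is the quantitative content, for integrable functions, of the paper's Theorem that for $n \ge 1$ the operator $\mathcal{J}_a^n$ is bounded in the Alexiewicz norm.) -/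
open MeasureTheory Set

/-!
Write `F y = ∫_a^y f`. Since `(x - t)^p = ∫_t^x p (x - s)^(p-1) ds`, Fubini on the triangle
`a < t < s ≤ x` gives `∫_a^x (x - t)^p f t dt = ∫_a^x p (x - s)^(p-1) F s ds` for `p > 0`.
The kernel is nonnegative with total mass `(x - a)^p`, so the right side is at most
`(x - a)^p sup_{[a,x]} |F|`; with `p = n - 1` this is the bound.
-/

section Kernel

variable {p x : ℝ}

lemma intervalIntegrable_mul_rpow_sub (hp : 0 < p) (a : ℝ) :
    IntervalIntegrable (fun s => p * (x - s) ^ (p - 1)) volume a x := by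
  have h := (intervalIntegral.intervalIntegrable_rpow' (a := x - a) (b := x - x)
    (r := p - 1) (by linarith)).comp_sub_left x
  simp only [sub_sub_cancel, sub_self, sub_zero] at h
  exact h.const_mul p

lemma integral_mul_rpow_sub (hp : 0 < p) (t : ℝ) :
    ∫ s in t..x, p * (x - s) ^ (p - 1) = (x - t) ^ p := by
  rw [intervalIntegral.integral_const_mul,
    intervalIntegral.integral_comp_sub_left (fun u : ℝ => u ^ (p - 1)) x, sub_self,
    integral_rpow (Or.inl (by linarith)), sub_add_cancel, Real.zero_rpow hp.ne', sub_zero]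
  field_simp

end Kernel

lemma integral_mul_integral_eq_integral_integral_mul {a x : ℝ} (hax : a ≤ x) {f g : ℝ → ℝ}
    (hf : IntegrableOn f (Ioc a x)) (hg : IntegrableOn g (Ioc a x)) :
    ∫ t in a..x, f t * ∫ s in t..x, g s = ∫ s in a..x, (∫ t in a..s, f t) * g s := by
  set ν := volume.restrict (Ioc a x)
  set H : ℝ × ℝ → ℝ := {q : ℝ × ℝ | q.1 < q.2}.indicator fun q => f q.1 * g q.2
  have hH : Integrable H (ν.prod ν) :=
    ((Integrable.mul_prod hf hg).indicator (measurableSet_lt measurable_fst measurable_snd))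
  have integral_left : ∀ t ∈ Ioc a x, ∫ s, H (t, s) ∂ν = f t * ∫ s in t..x, g s := by
    intro t ht
    have hHt : (fun s => H (t, s)) = (Ioi t).indicator fun s => f t * g s := by
      ext s; by_cases h : t < s <;> simp [H, h]
    rw [hHt, integral_indicator measurableSet_Ioi, Measure.restrict_restrict measurableSet_Ioi,
      inter_comm, Ioc_inter_Ioi, sup_eq_right.mpr ht.1.le, integral_const_mul,
      intervalIntegral.integral_of_le ht.2]
  have integral_right : ∀ s ∈ Ioc a x, ∫ t, H (t, s) ∂ν = (∫ t in a..s, f t) * g s := by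
    intro s hs
    have hHs : (fun t => H (t, s)) = (Iio s).indicator fun t => f t * g s := by
      ext t; by_cases h : t < s <;> simp [H, h]
    have hIoo : Iio s ∩ Ioc a x = Ioo a s := by
      ext t
      simp only [mem_inter_iff, mem_Iio, mem_Ioc, mem_Ioo]
      exact ⟨fun h => ⟨h.2.1, h.1⟩, fun h => ⟨h.2, h.1, h.2.le.trans hs.2⟩⟩
    rw [hHs, integral_indicator measurableSet_Iio, Measure.restrict_restrict measurableSet_Iio,
      hIoo, integral_mul_const, ← integral_Ioc_eq_integral_Ioo,
      intervalIntegral.integral_of_le hs.1.le]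
  calc ∫ t in a..x, f t * ∫ s in t..x, g s
      = ∫ t, ∫ s, H (t, s) ∂ν ∂ν := by
        rw [intervalIntegral.integral_of_le hax]
        exact (setIntegral_congr_fun measurableSet_Ioc integral_left).symm
    _ = ∫ s, ∫ t, H (t, s) ∂ν ∂ν := integral_integral_swap hH
    _ = ∫ s in a..x, (∫ t in a..s, f t) * g s := by
        rw [intervalIntegral.integral_of_le hax]
        exact setIntegral_congr_fun measurableSet_Ioc integral_right

lemma integral_rpow_sub_mul_eq {a x p : ℝ} (hax : a ≤ x) (hp : 0 < p) {f : ℝ → ℝ}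
    (hf : IntegrableOn f (Ioc a x)) :
    ∫ t in a..x, (x - t) ^ p * f t
      = ∫ s in a..x, (∫ t in a..s, f t) * (p * (x - s) ^ (p - 1)) := by
  rw [← integral_mul_integral_eq_integral_integral_mul hax hf
    ((intervalIntegrable_iff_integrableOn_Ioc_of_le hax).mp (intervalIntegrable_mul_rpow_sub hp a))]
  simp only [integral_mul_rpow_sub hp, mul_comm]

lemma abs_integral_rpow_sub_mul_le {a x p M : ℝ} (hax : a ≤ x) (hp : 0 ≤ p) {f : ℝ → ℝ}
    (hf : IntegrableOn f (Icc a x)) (hM : ∀ y ∈ Icc a x, |∫ t in a..y, f t| ≤ M) :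
    |∫ t in a..x, (x - t) ^ p * f t| ≤ (x - a) ^ p * M := by
  rcases hp.eq_or_lt with rfl | hp
  · simpa using hM x ⟨hax, le_rfl⟩
  have hK := intervalIntegrable_mul_rpow_sub (x := x) hp a
  have hF : ContinuousOn (fun y => ∫ t in a..y, f t) (uIcc a x) :=
    intervalIntegral.continuousOn_primitive_interval (by rwa [uIcc_of_le hax])
  rw [integral_rpow_sub_mul_eq hax hp (hf.mono_set Ioc_subset_Icc_self),
    ← integral_mul_rpow_sub hp a, ← intervalIntegral.integral_mul_const]
  refine (intervalIntegral.abs_integral_le_integral_abs hax).trans <|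
    intervalIntegral.integral_mono_on hax (hK.continuousOn_mul hF).abs (hK.mul_const M) ?_
  intro s hs
  have hK0 : 0 ≤ p * (x - s) ^ (p - 1) :=
    mul_nonneg hp.le (Real.rpow_nonneg (sub_nonneg.mpr hs.2) _)
  rw [abs_mul, abs_of_nonneg hK0]
  exact (mul_le_mul_of_nonneg_right (hM s hs) hK0).trans_eq (mul_comm _ _)

lemma abs_integral_le_iSup_abs_integral {a x : ℝ} {f : ℝ → ℝ} (hf : IntegrableOn f (Icc a x))
    {y : ℝ} (hy : y ∈ Icc a x) :
    |∫ t in a..y, f t| ≤ ⨆ z : Icc a x, |∫ t in a..(z : ℝ), f t| := by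
  have hF : ContinuousOn (fun y => |∫ t in a..y, f t|) (Icc a x) := by
    rcases le_or_gt a x with hax | hxa
    · rw [← uIcc_of_le hax]
      exact (intervalIntegral.continuousOn_primitive_interval (by rwa [uIcc_of_le hax])).abs
    · simp [Icc_eq_empty_of_lt hxa]
  have hbdd := isCompact_Icc.bddAbove_image hF
  rw [image_eq_range] at hbdd
  exact le_ciSup hbdd ⟨y, hy⟩

theorem rl_integral_alexiewicz_bound_general (a b n : ℝ) (hn : 1 ≤ n)
    (f : ℝ → ℝ) (hf : IntegrableOn f (Icc a b) volume) :
    ∀ x ∈ Icc a b,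
      |rlInt a n f x| ≤
        (x - a) ^ (n - 1) / Real.Gamma n * ⨆ y : Icc a x, |∫ t in a..(y : ℝ), f t| := by
  rintro x ⟨hax, hxb⟩
  have hfx : IntegrableOn f (Icc a x) := hf.mono_set (Icc_subset_Icc_right hxb)
  have hΓ : 0 < Real.Gamma n := Real.Gamma_pos_of_pos (by linarith)
  calc |rlInt a n f x| = |∫ t in a..x, (x - t) ^ (n - 1) * f t| / Real.Gamma n := by
        rw [rlInt, abs_mul, abs_of_pos (one_div_pos.mpr hΓ), one_div_mul_eq_div]
    _ ≤ (x - a) ^ (n - 1) * (⨆ y : Icc a x, |∫ t in a..(y : ℝ), f t|) / Real.Gamma n := by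
        gcongr
        exact abs_integral_rpow_sub_mul_le hax (by linarith) hfx
          fun y hy => abs_integral_le_iSup_abs_integral hfx hy
    _ = _ := by ring

theorem rl_integral_alexiewicz_bound (a b n : ℝ) (hab : a < b) (hn : 1 ≤ n)
    (f : ℝ → ℝ) (hf : IntegrableOn f (Icc a b) volume) :
    ∀ x ∈ Icc a b,
      |rlInt a n f x| ≤
        (x - a) ^ (n - 1) / Real.Gamma n * ⨆ y : Icc a x, |∫ t in a..(y : ℝ), f t| :=
  rl_integral_alexiewicz_bound_general a b n hn f hf
end

section
/- Let $a < b$ be real numbers and $n > 0$. If $(F_k)$ is a sequence of continuous functions on $[a,b]$ converging uniformly on $[a,b]$ to a continuous function $F$, then $(J_a^n F_k)$ converges uniformly on $[a,b]$ to $J_a^n F$, i.e. $\sup_{x \in [a,b]} \left| \frac{1}{\Gamma(n)} \int_a^x (x-t)^{n-1} (F_k(t) - F(t))\,dt \right| \to 0$ as $k \to \infty$. (This is the transport to primitives of the paper's Theorem that if $f_k \to f$ in the Alexiewicz norm on $D_{HK}$ then $\mathcal{J}_a^n f_k \to \mathcal{J}_a^n f$ in the Alexiewicz norm.) -/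
/-!
The difference `J^n F_k - J^n G` is `J^n (F_k - G)` by linearity, and the kernel `(x - t)^(n-1)`
is nonnegative with `∫_a^x (x - t)^(n-1) dt = (x - a)^n / n`. Hence `|J^n h(x)|` is at most
`sup |h| · (b - a)^n / Γ(n + 1)` on `[a, b]`: the uniform distance of the fractional integrals
is bounded by a fixed multiple of the uniform distance of the integrands.
-/

open MeasureTheory Set

section RiemannLiouville

variable {a n x : ℝ}

lemma intervalIntegrable_sub_rpow (hn : 0 < n) :
    IntervalIntegrable (fun t => (x - t) ^ (n - 1)) volume a x := by
  simpa using (intervalIntegral.intervalIntegrable_rpow' (a := x - a) (b := x - x)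
    (r := n - 1) (by linarith)).comp_sub_left x

lemma integral_sub_rpow (hn : 0 < n) :
    ∫ t in a..x, (x - t) ^ (n - 1) = (x - a) ^ n / n := by
  rw [intervalIntegral.integral_comp_sub_left (fun u => u ^ (n - 1)) x, sub_self,
    integral_rpow (Or.inl (by linarith)), sub_add_cancel, Real.zero_rpow hn.ne']
  ring

lemma rlInt_sub {f g : ℝ → ℝ} (hn : 0 < n) (hax : a ≤ x)
    (hf : ContinuousOn f (Icc a x)) (hg : ContinuousOn g (Icc a x)) :
    rlInt a n f x - rlInt a n g x = rlInt a n (f - g) x := by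
  have integrable {h : ℝ → ℝ} (hh : ContinuousOn h (Icc a x)) :
      IntervalIntegrable (fun t => (x - t) ^ (n - 1) * h t) volume a x :=
    (intervalIntegrable_sub_rpow hn).mul_continuousOn (by rwa [uIcc_of_le hax])
  simp only [rlInt, Pi.sub_apply, mul_sub,
    intervalIntegral.integral_sub (integrable hf) (integrable hg)]

lemma abs_rlInt_le {h : ℝ → ℝ} {δ : ℝ} (hn : 0 < n) (hax : a ≤ x) (hδ : 0 ≤ δ)
    (hh : ∀ t ∈ Ioc a x, |h t| ≤ δ) :
    |rlInt a n h x| ≤ δ * (x - a) ^ n / Real.Gamma (n + 1) := by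
  have hbound : ∀ᵐ t ∂volume.restrict (uIoc a x),
      ‖(x - t) ^ (n - 1) * h t‖ ≤ δ * (x - t) ^ (n - 1) := by
    refine (ae_restrict_mem measurableSet_uIoc).mono fun t ht => ?_
    rw [uIoc_of_le hax] at ht
    have hker : 0 ≤ (x - t) ^ (n - 1) := Real.rpow_nonneg (by linarith [ht.2]) _
    rw [Real.norm_eq_abs, abs_mul, abs_of_nonneg hker, mul_comm δ]
    exact mul_le_mul_of_nonneg_left (hh t ht) hker
  have hint : |∫ t in a..x, (x - t) ^ (n - 1) * h t| ≤ δ * ((x - a) ^ n / n) := by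
    have hpow : 0 ≤ (x - a) ^ n / n := div_nonneg (Real.rpow_nonneg (by linarith) n) hn.le
    calc |∫ t in a..x, (x - t) ^ (n - 1) * h t|
        ≤ |∫ t in a..x, δ * (x - t) ^ (n - 1)| :=
          intervalIntegral.norm_integral_le_abs_of_norm_le hbound
            ((intervalIntegrable_sub_rpow hn).const_mul δ)
      _ = δ * ((x - a) ^ n / n) := by
          rw [intervalIntegral.integral_const_mul, integral_sub_rpow hn, abs_of_nonneg]
          positivity
  have hΓ := Real.Gamma_pos_of_pos hn
  rw [rlInt, abs_mul, abs_of_pos (one_div_pos.2 hΓ), Real.Gamma_add_one hn.ne']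
  calc 1 / Real.Gamma n * |∫ t in a..x, (x - t) ^ (n - 1) * h t|
      ≤ 1 / Real.Gamma n * (δ * ((x - a) ^ n / n)) := by gcongr
    _ = δ * (x - a) ^ n / (n * Real.Gamma n) := by field_simp

end RiemannLiouville

lemma dist_rlInt_le {a b n δ x : ℝ} {f g : ℝ → ℝ} (hn : 0 < n) (hx : x ∈ Icc a b)
    (hf : ContinuousOn f (Icc a b)) (hg : ContinuousOn g (Icc a b)) (hδ : 0 ≤ δ)
    (hfg : ∀ t ∈ Icc a b, dist (f t) (g t) ≤ δ) :
    dist (rlInt a n f x) (rlInt a n g x) ≤ δ * (b - a) ^ n / Real.Gamma (n + 1) := by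
  have hsub : Icc a x ⊆ Icc a b := Icc_subset_Icc_right hx.2
  rw [Real.dist_eq, rlInt_sub hn hx.1 (hf.mono hsub) (hg.mono hsub)]
  refine (abs_rlInt_le hn hx.1 hδ fun t ht => hfg t (hsub (Ioc_subset_Icc_self ht))).trans ?_
  have hpow : (x - a) ^ n ≤ (b - a) ^ n :=
    Real.rpow_le_rpow (by linarith [hx.1]) (by linarith [hx.2]) hn.le
  have hΓ := Real.Gamma_pos_of_pos (add_pos hn one_pos)
  gcongr

theorem rl_integral_continuous_in_uniform_norm_general (a b n : ℝ) (hn : 0 < n)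
    (F : ℕ → ℝ → ℝ) (G : ℝ → ℝ)
    (hFk : ∀ k, ContinuousOn (F k) (Icc a b)) (hG : ContinuousOn G (Icc a b))
    (hconv : TendstoUniformlyOn F G Filter.atTop (Icc a b)) :
    TendstoUniformlyOn (fun k => rlInt a n (F k)) (rlInt a n G) Filter.atTop (Icc a b) := by
  rw [Metric.tendstoUniformlyOn_iff] at hconv ⊢
  intro ε hε
  -- `|C|` rather than `C`: for `b < a` the real power `(b - a) ^ n` may be negative.
  set C := (b - a) ^ n / Real.Gamma (n + 1)
  have hδ : 0 < ε / (|C| + 1) := by positivity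
  filter_upwards [hconv _ hδ] with k hk x hx
  calc dist (rlInt a n G x) (rlInt a n (F k) x)
      ≤ ε / (|C| + 1) * (b - a) ^ n / Real.Gamma (n + 1) :=
        dist_rlInt_le hn hx hG (hFk k) hδ.le fun t ht => (hk t ht).le
    _ = ε * (C / (|C| + 1)) := by ring
    _ < ε :=
        mul_lt_of_lt_one_right hε ((div_lt_one (by positivity)).2 (by linarith [le_abs_self C]))

theorem rl_integral_continuous_in_uniform_norm (a b n : ℝ) (hab : a < b) (hn : 0 < n)
    (F : ℕ → ℝ → ℝ) (G : ℝ → ℝ)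
    (hFk : ∀ k, ContinuousOn (F k) (Icc a b)) (hG : ContinuousOn G (Icc a b))
    (hconv : TendstoUniformlyOn F G Filter.atTop (Icc a b)) :
    TendstoUniformlyOn (fun k => rlInt a n (F k)) (rlInt a n G) Filter.atTop (Icc a b) :=
  rl_integral_continuous_in_uniform_norm_general a b n hn F G hFk hG hconv
end

section
/- Let $a < b$ be real numbers, $n > 0$, $f \in L^1[a,b]$, and let $F(x) := \int_a^x f(t)\,dt$ be its indefinite integral. Then for every $x \in [a,b]$, $J_a^n F(x) = \int_a^x J_a^n f(t)\,dt$; consequently $J_a^n F$ is differentiable at almost every $x \in (a,b)$ with derivative $(J_a^n F)'(x) = J_a^n f(x)$. (This is the content, for Lebesgue integrable $f$, of the paper's identity $\mathcal{J}_a^n f = D(\mathcal{J}_a^n F)$, i.e. the fractional integral of $f$ is the derivative of the fractional integral of its primitive — a property the paper notes is new even for Lebesgue integrable functions.) -/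
/-!
Both sides of the identity are Volterra integrals against the kernel `k u = u ^ (n - 1)`, which is
integrable near `0` because `n > 0`. Fubini on the triangle `a < s < t ≤ x` turns
`∫_a^x k (x - t) F t dt` and `∫_a^x ∫_a^t k (t - s) f s ds dt` into the same integral
`∫_a^x (∫_0^(x - s) k) f s ds`; this works for any kernel integrable on `(0, x - a]`. The same
Fubini argument shows that `J_a^n f` is integrable, so the Lebesgue differentiation theorem
differentiates `x ↦ ∫_a^x J_a^n f = J_a^n F x` almost everywhere.
-/

open MeasureTheory Set

noncomputable def volterra (k : ℝ → ℝ) (a : ℝ) (h : ℝ → ℝ) (x : ℝ) : ℝ :=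
  ∫ t in a..x, k (x - t) * h t

section Triangle

variable {a x : ℝ} {K : ℝ → ℝ → ℝ}

theorem integral_indicator_lt_prodMk_left {t : ℝ} (ht : t ∈ Ioc a x) :
    ∫ s in Ioc a x, {p : ℝ × ℝ | p.2 < p.1}.indicator (Function.uncurry K) (t, s)
      = ∫ s in Ioc a t, K t s := by
  have hslice : (fun s => {p : ℝ × ℝ | p.2 < p.1}.indicator (Function.uncurry K) (t, s))
      = (Iio t).indicator (K t) := by
    ext s; simp only [indicator, mem_ofPred_eq, mem_Iio, Function.uncurry_apply_pair]
  have htriangle : Ioc a x ∩ Iio t = Ioo a t := by grind [ht.2]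
  rw [hslice, setIntegral_indicator measurableSet_Iio, htriangle, integral_Ioc_eq_integral_Ioo]

theorem integral_indicator_lt_prodMk_right {s : ℝ} (hs : s ∈ Ioc a x) :
    ∫ t in Ioc a x, {p : ℝ × ℝ | p.2 < p.1}.indicator (Function.uncurry K) (t, s)
      = ∫ t in Ioc s x, K t s := by
  have hslice : (fun t => {p : ℝ × ℝ | p.2 < p.1}.indicator (Function.uncurry K) (t, s))
      = (Ioi s).indicator (K · s) := by
    ext t; simp only [indicator, mem_ofPred_eq, mem_Ioi, Function.uncurry_apply_pair]
  rw [hslice, setIntegral_indicator measurableSet_Ioi, Ioc_inter_Ioi, max_eq_right hs.1.le]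

/-- Dirichlet's formula. -/
theorem integral_Ioc_integral_Ioc_swap
    (hK : Integrable ({p : ℝ × ℝ | p.2 < p.1}.indicator (Function.uncurry K))
      ((volume.restrict (Ioc a x)).prod (volume.restrict (Ioc a x)))) :
    ∫ t in Ioc a x, ∫ s in Ioc a t, K t s = ∫ s in Ioc a x, ∫ t in Ioc s x, K t s := calc
  _ = ∫ t in Ioc a x, ∫ s in Ioc a x,
        {p : ℝ × ℝ | p.2 < p.1}.indicator (Function.uncurry K) (t, s) :=
    setIntegral_congr_fun measurableSet_Ioc fun _ ht => (integral_indicator_lt_prodMk_left ht).symm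
  _ = ∫ s in Ioc a x, ∫ t in Ioc a x,
        {p : ℝ × ℝ | p.2 < p.1}.indicator (Function.uncurry K) (t, s) :=
    integral_integral_swap hK
  _ = _ := setIntegral_congr_fun measurableSet_Ioc fun _ hs => integral_indicator_lt_prodMk_right hs

theorem integrableOn_integral_Ioc_of_integrable_indicator_lt
    (hK : Integrable ({p : ℝ × ℝ | p.2 < p.1}.indicator (Function.uncurry K))
      ((volume.restrict (Ioc a x)).prod (volume.restrict (Ioc a x)))) :
    IntegrableOn (fun t => ∫ s in Ioc a t, K t s) (Ioc a x) :=
  hK.integral_prod_left.congr <| ae_restrict_of_forall_mem measurableSet_Ioc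
    fun _ ht => integral_indicator_lt_prodMk_left ht

end Triangle

section Volterra

variable {k f : ℝ → ℝ} {a x : ℝ}

theorem integrable_indicator_lt_sub_mul (hk : IntegrableOn k (Ioc 0 (x - a)))
    (hf : IntegrableOn f (Ioc a x)) :
    Integrable
      ({p : ℝ × ℝ | p.2 < p.1}.indicator (Function.uncurry fun t s => k (t - s) * f s))
      ((volume.restrict (Ioc a x)).prod (volume.restrict (Ioc a x))) := by
  set φ := (Ioc 0 (x - a)).indicator k
  set ψ := (Ioc a x).indicator f
  have hφψ : Integrable (fun p : ℝ × ℝ => φ p.1 * ψ p.2) (volume.prod volume) :=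
    ((integrable_indicator_iff measurableSet_Ioc).2 hk).mul_prod
      ((integrable_indicator_iff measurableSet_Ioc).2 hf)
  -- the shear `(t, s) ↦ (t - s, s)` preserves Lebesgue measure on the plane
  have hsheared : Integrable (fun p : ℝ × ℝ => φ (p.1 - p.2) * ψ p.2) (volume.prod volume) :=
    ((measurePreserving_sub_prod volume volume).integrable_comp hφψ.aestronglyMeasurable).2 hφψ
  rw [Measure.prod_restrict]
  refine hsheared.integrableOn.congr <|
    ae_restrict_of_forall_mem (measurableSet_Ioc.prod measurableSet_Ioc) fun p ⟨ht, hs⟩ => ?_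
  by_cases hst : p.2 < p.1
  · simp only [indicator_of_mem (show p ∈ {p : ℝ × ℝ | p.2 < p.1} from hst), φ, ψ,
      Function.uncurry, indicator_of_mem hs,
      indicator_of_mem (show p.1 - p.2 ∈ Ioc 0 (x - a) by grind)]
  · simp only [indicator_of_notMem (show p ∉ {p : ℝ × ℝ | p.2 < p.1} from hst), φ,
      indicator_of_notMem (show p.1 - p.2 ∉ Ioc 0 (x - a) by grind), zero_mul]

theorem integrableOn_comp_sub_left (hax : a ≤ x) (hk : IntegrableOn k (Ioc 0 (x - a))) :
    IntegrableOn (fun t => k (x - t)) (Ioc a x) := by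
  have hrefl :=
    ((intervalIntegrable_iff_integrableOn_Ioc_of_le (sub_nonneg.2 hax)).2 hk).comp_sub_left x
  simpa using hrefl.2

theorem integral_Ioc_comp_sub_left_eq_comp_sub_right {s : ℝ} (hsx : s ≤ x) :
    ∫ t in Ioc s x, k (x - t) = ∫ t in Ioc s x, k (t - s) := by
  rw [← intervalIntegral.integral_of_le hsx, ← intervalIntegral.integral_of_le hsx,
    intervalIntegral.integral_comp_sub_left, intervalIntegral.integral_comp_sub_right, sub_self,
    sub_self]

theorem volterra_primitive (hax : a ≤ x) (hk : IntegrableOn k (Ioc 0 (x - a)))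
    (hf : IntegrableOn f (Ioc a x)) :
    volterra k a (fun y => ∫ s in a..y, f s) x = ∫ t in a..x, volterra k a f t := calc
  _ = ∫ t in Ioc a x, ∫ s in Ioc a t, k (x - t) * f s := by
    rw [volterra, intervalIntegral.integral_of_le hax]
    refine setIntegral_congr_fun measurableSet_Ioc fun t ht => ?_
    rw [intervalIntegral.integral_of_le ht.1.le, integral_const_mul]
  _ = ∫ s in Ioc a x, ∫ t in Ioc s x, k (x - t) * f s :=
    integral_Ioc_integral_Ioc_swap <|
      ((integrableOn_comp_sub_left hax hk).mul_prod hf).indicator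
        (measurableSet_lt measurable_snd measurable_fst)
  _ = ∫ s in Ioc a x, ∫ t in Ioc s x, k (t - s) * f s :=
    setIntegral_congr_fun measurableSet_Ioc fun s hs =>
      integral_Ioc_comp_sub_left_eq_comp_sub_right (k := fun u => k u * f s) hs.2
  _ = ∫ t in Ioc a x, ∫ s in Ioc a t, k (t - s) * f s :=
    (integral_Ioc_integral_Ioc_swap (integrable_indicator_lt_sub_mul hk hf)).symm
  _ = ∫ t in a..x, volterra k a f t := by
    rw [intervalIntegral.integral_of_le hax]
    refine setIntegral_congr_fun measurableSet_Ioc fun t ht => ?_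
    rw [volterra, intervalIntegral.integral_of_le ht.1.le]

theorem intervalIntegrable_volterra (hax : a ≤ x) (hk : IntegrableOn k (Ioc 0 (x - a)))
    (hf : IntegrableOn f (Ioc a x)) :
    IntervalIntegrable (volterra k a f) volume a x := by
  rw [intervalIntegrable_iff_integrableOn_Ioc_of_le hax]
  refine (integrableOn_integral_Ioc_of_integrable_indicator_lt
    (integrable_indicator_lt_sub_mul hk hf)).congr_fun (fun t ht => ?_) measurableSet_Ioc
  rw [volterra, intervalIntegral.integral_of_le ht.1.le]

end Volterra

theorem rlInt_eq_volterra (a n : ℝ) (h : ℝ → ℝ) (x : ℝ) :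
    rlInt a n h x = 1 / Real.Gamma n * volterra (· ^ (n - 1)) a h x :=
  rfl

theorem rl_integral_of_primitive (a b n : ℝ) (hab : a < b) (hn : 0 < n)
    (f : ℝ → ℝ) (hf : IntegrableOn f (Icc a b) volume)
    (F : ℝ → ℝ) (hF : ∀ x, F x = ∫ t in a..x, f t) :
    (∀ x ∈ Icc a b, rlInt a n F x = ∫ t in a..x, rlInt a n f t) ∧
    ∀ᵐ x ∂(volume.restrict (Ioo a b)), HasDerivAt (rlInt a n F) (rlInt a n f x) x := by
  have hkernel (c : ℝ) : IntegrableOn (· ^ (n - 1)) (Ioc 0 c) :=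
    (intervalIntegral.intervalIntegrable_rpow' (by linarith)).1
  have hfIoc {x : ℝ} (hx : x ≤ b) : IntegrableOn f (Ioc a x) :=
    hf.mono_set fun t ht => ⟨ht.1.le, ht.2.trans hx⟩
  have hprimitive : ∀ x ∈ Icc a b, rlInt a n F x = ∫ t in a..x, rlInt a n f t := by
    intro x hx
    simp only [rlInt_eq_volterra, intervalIntegral.integral_const_mul, funext hF]
    rw [volterra_primitive hx.1 (hkernel _) (hfIoc hx.2)]
  refine ⟨hprimitive, ?_⟩
  have hint : IntervalIntegrable (rlInt a n f) volume a b :=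
    (intervalIntegrable_volterra hab.le (hkernel _) (hfIoc le_rfl)).const_mul _
  filter_upwards [ae_restrict_mem measurableSet_Ioo,
    ae_restrict_of_ae hint.ae_hasDerivAt_integral] with x hx hderiv
  have hx' : x ∈ uIcc a b := uIcc_of_le hab.le ▸ Ioo_subset_Icc_self hx
  exact (hderiv hx' a left_mem_uIcc).congr_of_eventuallyEq
    (Filter.eventually_of_mem (Icc_mem_nhds hx.1 hx.2) hprimitive)
end

section
/- Let $a < b$ be real numbers, $n > 0$, $f \in L^1[a,b]$, and let $\phi : [a,b] \to \mathbb{R}$ be a function of bounded variation on $[a,b]$. Then $\int_a^b \phi(x)\, J_a^n f(x)\,dx = \int_a^b f(t)\, J_{b^-}^n \phi(t)\,dt$, where $J_{b^-}^n \phi(t) := \frac{1}{\Gamma(n)} \int_t^b (x-t)^{n-1} \phi(x)\,dx$ is the right-sided Riemann–Liouville fractional integral, and both double integrals are well defined. (This is the paper's integration-by-parts formula for the fractional integral, stated here for Lebesgue integrable $f$, a subspace of $D_{HK}$.) -/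
open MeasureTheory Set

/-- The right-sided Riemann–Liouville fractional integral of order `n` with endpoint `b`. -/
noncomputable def rlIntR (b n : ℝ) (h : ℝ → ℝ) (t : ℝ) : ℝ :=
  (1 / Real.Gamma n) * ∫ x in t..b, (x - t) ^ (n - 1) * h x

/-!
Both sides are the two iterated integrals of `f t * K(t, x) * φ x` over `[a, b]²`, where
`K(t, x) = rlKernel n t x` is `(x - t) ^ (n - 1) / Γ(n)` for `t ≤ x` and `0` otherwise, so the
identity is Fubini's theorem. The integrand is integrable on the square because `φ`, being of
bounded variation, is bounded (and, as a difference of monotone functions, measurable), while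
each slice `x ↦ K(t, x)` has integral `(b - t) ^ n / Γ(n + 1) ≤ (b - a) ^ n / Γ(n + 1)`.
-/

theorem MeasureTheory.Integrable.mul_prod_of_integral_norm_le {α β : Type*} [MeasurableSpace α]
    [MeasurableSpace β] {μ : Measure α} {ν : Measure β} [SFinite μ] [SFinite ν]
    {g : α → ℝ} {L : α × β → ℝ} {C : ℝ} (hg : Integrable g μ)
    (hL : AEStronglyMeasurable L (μ.prod ν))
    (hL_slice : ∀ᵐ t ∂μ, Integrable (fun x => L (t, x)) ν)
    (hL_le : ∀ᵐ t ∂μ, ∫ x, ‖L (t, x)‖ ∂ν ≤ C) :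
    Integrable (fun p => g p.1 * L p) (μ.prod ν) := by
  have hG : AEStronglyMeasurable (fun p : α × β => g p.1 * L p) (μ.prod ν) :=
    hg.aestronglyMeasurable.comp_fst.mul hL
  refine (integrable_prod_iff hG).2 ⟨?_, ?_⟩
  · filter_upwards [hL_slice] with t ht using ht.const_mul (g t)
  · refine (hg.norm.mul_const C).mono' hG.norm.integral_prod_right' ?_
    filter_upwards [hL_le] with t ht
    simp only [norm_mul, integral_const_mul, norm_norm,
      Real.norm_of_nonneg (integral_nonneg fun _ => norm_nonneg _)]
    exact mul_le_mul_of_nonneg_left ht (norm_nonneg _)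

namespace BoundedVariationOn

lemma exists_norm_le {α E : Type*} [LinearOrder α] [SeminormedAddCommGroup E] {s : Set α}
    {φ : α → E} (hφ : BoundedVariationOn φ s) : ∃ C, ∀ x ∈ s, ‖φ x‖ ≤ C := by
  rcases s.eq_empty_or_nonempty with rfl | ⟨a, ha⟩
  · exact ⟨0, by simp⟩
  refine ⟨‖φ a‖ + (eVariationOn φ s).toReal, fun x hx => ?_⟩
  calc ‖φ x‖ ≤ ‖φ a‖ + ‖φ x - φ a‖ := norm_le_insert' _ _
    _ ≤ ‖φ a‖ + (eVariationOn φ s).toReal := by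
      rw [← dist_eq_norm]
      gcongr
      exact hφ.dist_le hx ha

lemma aestronglyMeasurable_restrict {μ : Measure ℝ} {s : Set ℝ} (hs : MeasurableSet s)
    {φ : ℝ → ℝ} (hφ : BoundedVariationOn φ s) : AEStronglyMeasurable φ (μ.restrict s) := by
  obtain ⟨p, q, hp, hq, rfl⟩ := hφ.locallyBoundedVariationOn.exists_monotoneOn_sub_monotoneOn
  exact ((aemeasurable_restrict_of_monotoneOn hs hp).sub
    (aemeasurable_restrict_of_monotoneOn hs hq)).aestronglyMeasurable

end BoundedVariationOn

section

variable {α : Type*} [LinearOrder α] {a b c : α}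

lemma Icc_inter_Ici_of_le (h : a ≤ c) : Icc a b ∩ Ici c = Icc c b := by
  rw [← Ici_inter_Iic, inter_right_comm, Ici_inter_Ici, max_eq_right h, Ici_inter_Iic]

lemma Icc_inter_Iic_of_le (h : c ≤ b) : Icc a b ∩ Iic c = Icc a c := by
  rw [← Ici_inter_Iic, inter_assoc, Iic_inter_Iic, min_eq_right h, Ici_inter_Iic]

end

noncomputable def rlKernel (n t x : ℝ) : ℝ :=
  if t ≤ x then (x - t) ^ (n - 1) / Real.Gamma n else 0

lemma measurable_rlKernel (n : ℝ) : Measurable fun p : ℝ × ℝ => rlKernel n p.1 p.2 :=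
  Measurable.ite (measurableSet_le measurable_fst measurable_snd)
    (((measurable_snd.sub measurable_fst).pow_const _).div_const _) measurable_const

lemma rlKernel_nonneg {n : ℝ} (hn : 0 < n) (t x : ℝ) : 0 ≤ rlKernel n t x := by
  unfold rlKernel
  split_ifs with htx
  · exact div_nonneg (Real.rpow_nonneg (sub_nonneg.2 htx) _) (Real.Gamma_pos_of_pos hn).le
  · exact le_rfl

lemma rlKernel_mul_eq_indicator_Ici (n t : ℝ) (h : ℝ → ℝ) :
    (fun x => rlKernel n t x * h x) =
      (Ici t).indicator fun x => (x - t) ^ (n - 1) / Real.Gamma n * h x := by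
  ext x
  by_cases htx : t ≤ x <;> simp [rlKernel, htx]

lemma rlKernel_mul_eq_indicator_Iic (n x : ℝ) (h : ℝ → ℝ) :
    (fun t => rlKernel n t x * h t) =
      (Iic x).indicator fun t => (x - t) ^ (n - 1) / Real.Gamma n * h t := by
  ext t
  by_cases htx : t ≤ x <;> simp [rlKernel, htx]

lemma setIntegral_rlKernel_mul_right (n : ℝ) (h : ℝ → ℝ) {a b t : ℝ} (ht : t ∈ Icc a b) :
    ∫ x in Icc a b, rlKernel n t x * h x = rlIntR b n h t := by
  rw [rlKernel_mul_eq_indicator_Ici, setIntegral_indicator measurableSet_Ici,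
    Icc_inter_Ici_of_le ht.1, integral_Icc_eq_integral_Ioc,
    ← intervalIntegral.integral_of_le ht.2, rlIntR, ← intervalIntegral.integral_const_mul]
  congr 1 with x
  ring

lemma setIntegral_rlKernel_mul_left (n : ℝ) (h : ℝ → ℝ) {a b x : ℝ} (hx : x ∈ Icc a b) :
    ∫ t in Icc a b, rlKernel n t x * h t = rlInt a n h x := by
  rw [rlKernel_mul_eq_indicator_Iic, setIntegral_indicator measurableSet_Iic,
    Icc_inter_Iic_of_le hx.2, integral_Icc_eq_integral_Ioc,
    ← intervalIntegral.integral_of_le hx.1, rlInt, ← intervalIntegral.integral_const_mul]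
  congr 1 with t
  ring

lemma integrableOn_rlKernel {n : ℝ} (hn : 0 < n) {a b t : ℝ} (ht : t ∈ Icc a b) :
    IntegrableOn (rlKernel n t) (Icc a b) := by
  have hK : rlKernel n t = (Ici t).indicator fun x => (x - t) ^ (n - 1) / Real.Gamma n := by
    simpa using rlKernel_mul_eq_indicator_Ici n t 1
  have hII := ((intervalIntegral.intervalIntegrable_rpow' (a := 0) (b := b - t)
    (show (-1 : ℝ) < n - 1 by linarith)).comp_sub_right t).div_const (Real.Gamma n)
  simp only [zero_add, sub_add_cancel] at hII
  rw [hK, integrableOn_indicator_iff measurableSet_Ici, inter_comm, Icc_inter_Ici_of_le ht.1,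
    integrableOn_Icc_iff_integrableOn_Ioc]
  exact (intervalIntegrable_iff_integrableOn_Ioc_of_le ht.2).1 hII

lemma rlIntR_const {n : ℝ} (hn : 0 < n) (b c t : ℝ) :
    rlIntR b n (fun _ => c) t = c * (b - t) ^ n / Real.Gamma (n + 1) := by
  have hsub := intervalIntegral.integral_comp_sub_right (fun u : ℝ => u ^ (n - 1)) (a := t)
    (b := b) t
  simp only [sub_self] at hsub
  rw [rlIntR, Real.Gamma_add_one hn.ne', intervalIntegral.integral_mul_const, hsub,
    integral_rpow (Or.inl (by linarith)), sub_add_cancel, Real.zero_rpow hn.ne']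
  field_simp
  ring

section

variable {a b n M : ℝ} {f φ : ℝ → ℝ}

lemma integral_norm_rlKernel_mul_le (hn : 0 < n) (hφ : ∀ x ∈ Icc a b, ‖φ x‖ ≤ M)
    {t : ℝ} (ht : t ∈ Icc a b) :
    ∫ x in Icc a b, ‖rlKernel n t x * φ x‖ ≤ M * (b - a) ^ n / Real.Gamma (n + 1) := by
  have hK := integrableOn_rlKernel hn ht
  have hM : 0 ≤ M := (norm_nonneg _).trans (hφ t ht)
  calc ∫ x in Icc a b, ‖rlKernel n t x * φ x‖
      ≤ ∫ x in Icc a b, rlKernel n t x * M := by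
        refine integral_mono_of_nonneg (.of_forall fun _ => norm_nonneg _) (hK.mul_const M)
          (ae_restrict_of_forall_mem measurableSet_Icc fun x hx => ?_)
        simp only [norm_mul, Real.norm_of_nonneg (rlKernel_nonneg hn t x)]
        exact mul_le_mul_of_nonneg_left (hφ x hx) (rlKernel_nonneg hn t x)
    _ = M * (b - t) ^ n / Real.Gamma (n + 1) := by
        rw [setIntegral_rlKernel_mul_right n (fun _ => M) ht, rlIntR_const hn]
    _ ≤ M * (b - a) ^ n / Real.Gamma (n + 1) := by
        gcongr
        · exact sub_nonneg.2 ht.2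
        · exact ht.1

lemma integrable_prod_mul_rlKernel_mul (hn : 0 < n) (hf : IntegrableOn f (Icc a b))
    (hφm : AEStronglyMeasurable φ (volume.restrict (Icc a b)))
    (hφ : ∀ x ∈ Icc a b, ‖φ x‖ ≤ M) :
    Integrable (fun p : ℝ × ℝ => f p.1 * (rlKernel n p.1 p.2 * φ p.2))
      ((volume.restrict (Icc a b)).prod (volume.restrict (Icc a b))) := by
  refine Integrable.mul_prod_of_integral_norm_le (C := M * (b - a) ^ n / Real.Gamma (n + 1)) hf
    ((measurable_rlKernel n).aestronglyMeasurable.mul hφm.comp_snd) ?_ ?_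
  · filter_upwards [ae_restrict_mem measurableSet_Icc] with t ht
    exact (integrableOn_rlKernel hn ht).mul_bdd hφm (ae_restrict_of_forall_mem measurableSet_Icc hφ)
  · filter_upwards [ae_restrict_mem measurableSet_Icc] with t ht
    exact integral_norm_rlKernel_mul_le hn hφ ht

theorem rl_integration_by_parts_Icc (hn : 0 < n) (hf : IntegrableOn f (Icc a b))
    (hφm : AEStronglyMeasurable φ (volume.restrict (Icc a b)))
    (hφ : ∀ x ∈ Icc a b, ‖φ x‖ ≤ M) :
    IntegrableOn (fun x => φ x * rlInt a n f x) (Icc a b) ∧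
    IntegrableOn (fun t => f t * rlIntR b n φ t) (Icc a b) ∧
    ∫ x in Icc a b, φ x * rlInt a n f x = ∫ t in Icc a b, f t * rlIntR b n φ t := by
  have hG := integrable_prod_mul_rlKernel_mul hn hf hφm hφ
  have hleft : (fun x => ∫ t in Icc a b, f t * (rlKernel n t x * φ x)) =ᵐ[volume.restrict (Icc a b)]
      fun x => φ x * rlInt a n f x := by
    filter_upwards [ae_restrict_mem measurableSet_Icc] with x hx
    calc ∫ t in Icc a b, f t * (rlKernel n t x * φ x)
        = ∫ t in Icc a b, φ x * (rlKernel n t x * f t) := by congr 1 with t; ring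
      _ = φ x * rlInt a n f x := by rw [integral_const_mul, setIntegral_rlKernel_mul_left n f hx]
  have hright : (fun t => ∫ x in Icc a b, f t * (rlKernel n t x * φ x)) =ᵐ[volume.restrict (Icc a b)]
      fun t => f t * rlIntR b n φ t := by
    filter_upwards [ae_restrict_mem measurableSet_Icc] with t ht
    rw [integral_const_mul, setIntegral_rlKernel_mul_right n φ ht]
  refine ⟨hG.integral_prod_right.congr hleft, hG.integral_prod_left.congr hright, ?_⟩
  rw [← integral_congr_ae hleft, ← integral_congr_ae hright]
  exact (integral_integral_swap hG).symm

end

theorem rl_integration_by_parts (a b n : ℝ) (hab : a < b) (hn : 0 < n)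
    (f : ℝ → ℝ) (hf : IntegrableOn f (Icc a b) volume)
    (φ : ℝ → ℝ) (hφ : BoundedVariationOn φ (Icc a b)) :
    IntegrableOn (fun x => φ x * rlInt a n f x) (Icc a b) volume ∧
    IntegrableOn (fun t => f t * rlIntR b n φ t) (Icc a b) volume ∧
    ∫ x in a..b, φ x * rlInt a n f x = ∫ t in a..b, f t * rlIntR b n φ t := by
  obtain ⟨M, hM⟩ := hφ.exists_norm_le
  obtain ⟨hleft, hright, heq⟩ := rl_integration_by_parts_Icc hn hf
    (hφ.aestronglyMeasurable_restrict measurableSet_Icc) hM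
  refine ⟨hleft, hright, ?_⟩
  rwa [intervalIntegral.integral_of_le hab.le, intervalIntegral.integral_of_le hab.le,
    ← integral_Icc_eq_integral_Ioc, ← integral_Icc_eq_integral_Ioc]
end
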